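/- Let p be prime, a ≥ 1, and P̃ a one-variable Laurent polynomial over ℤ/p^aℤ with P̃(x)^p ≡ P̃(x^p) (mod p^a). If there exists n_0 with ct(P̃^{n_0}) ≡ 0 (mod p), then for every Laurent polynomial Q over ℤ/p^aℤ, the set {n : ct(P̃^n Q) ≡ 0 (mod p^a)} has natural density 1. -/

import Mathlib

open scoped Classical

/-- `Λ_p`: delete terms whose exponent is not divisible by `p` and substitute `x^p ↦ x`. -/
noncomputable def lam {R : Type*} [Semiring R] (p : ℕ) (hp : p ≠ 0) (Q : LaurentPolynomial R) :
    LaurentPolynomial R :=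
  AddMonoidAlgebra.ofCoeff (Finsupp.comapDomain (fun i : ℤ => (p : ℤ) * i) Q.coeff
    ((mul_right_injective₀ (Int.natCast_ne_zero.mpr hp)).injOn))

/-- `substPow p Q = Q(x^p)`. -/
noncomputable def substPow {R : Type*} [Semiring R] (p : ℕ) (Q : LaurentPolynomial R) :
    LaurentPolynomial R :=
  AddMonoidAlgebra.ofCoeff (Finsupp.mapDomain (fun i : ℤ => (p : ℤ) * i) Q.coeff)

/-- The largest absolute value of an exponent with nonzero coefficient (`0` for `Q = 0`). -/
noncomputable def ldeg {R : Type*} [Semiring R] (Q : LaurentPolynomial R) : ℕ :=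
  Q.coeff.support.sup fun i => i.natAbs

section general
variable {k : Type*} [CommSemiring k]

lemma lam_apply (p : ℕ) (hp : p ≠ 0) (Q : LaurentPolynomial k) (i : ℤ) :
    (lam p hp Q).coeff i = Q.coeff ((p : ℤ) * i) := rfl

lemma mul_apply_left' (f g : LaurentPolynomial k) (x : ℤ) :
    (f * g).coeff x = f.coeff.sum fun a b => b * g.coeff (-a + x) :=
  AddMonoidAlgebra.coeff_mul_apply_left f g x

lemma key_ct (p : ℕ) (hp : p ≠ 0) (A B : LaurentPolynomial k) :
    (substPow p A * B).coeff 0 = (A * lam p hp B).coeff 0 := by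
  rw [mul_apply_left', mul_apply_left', substPow, AddMonoidAlgebra.coeff_ofCoeff]
  rw [Finsupp.sum_mapDomain_index (by simp) (by intros; rw [add_mul])]
  apply Finsupp.sum_congr
  intro a _
  rw [lam_apply]
  ring_nf

lemma substPow_mul (p : ℕ) (A B : LaurentPolynomial k) :
    substPow p (A * B) = substPow p A * substPow p B :=
  (AddMonoidAlgebra.mapDomain_mul (AddMonoidHom.mulLeft (p : ℤ)) A B :)

lemma substPow_one (p : ℕ) : substPow p (1 : LaurentPolynomial k) = 1 :=
  (AddMonoidAlgebra.mapDomain_one (R := k) (AddMonoidHom.mulLeft (p : ℤ)) :)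

lemma substPow_pow (p : ℕ) (A : LaurentPolynomial k) (m : ℕ) :
    substPow p (A ^ m) = (substPow p A) ^ m := by
  induction m with
  | zero => simpa using substPow_one p
  | succ m ih => rw [pow_succ, substPow_mul, ih, pow_succ]

lemma apply_eq_zero_of_ldeg_lt {Q : LaurentPolynomial k} {i : ℤ} (h : ldeg Q < i.natAbs) :
    Q.coeff i = 0 := by
  by_contra hne
  exact absurd (Finset.le_sup (f := fun i : ℤ => i.natAbs) (Finsupp.mem_support_iff.mpr hne))
    (not_le.mpr h)

lemma ldeg_mul_le (A B : LaurentPolynomial k) : ldeg (A * B) ≤ ldeg A + ldeg B := by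
  apply Finset.sup_le
  intro i hi
  have := AddMonoidAlgebra.support_coeff_mul_subset A B hi
  rw [Finset.mem_add] at this
  obtain ⟨x, hx, y, hy, rfl⟩ := this
  exact le_trans (Int.natAbs_add_le x y)
    (add_le_add (Finset.le_sup (f := fun i : ℤ => i.natAbs) hx)
      (Finset.le_sup (f := fun i : ℤ => i.natAbs) hy))

lemma ldeg_one : ldeg (1 : LaurentPolynomial k) = 0 := by
  apply Nat.le_zero.mp
  apply Finset.sup_le
  intro i hi
  rw [show (1 : LaurentPolynomial k) = AddMonoidAlgebra.single 0 1 from AddMonoidAlgebra.one_def] at hi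
  have := Finsupp.support_single_subset hi
  simp only [Finset.mem_singleton] at this
  simp [this]

lemma ldeg_pow_le (A : LaurentPolynomial k) (m : ℕ) : ldeg (A ^ m) ≤ m * ldeg A := by
  induction m with
  | zero => simp [ldeg_one]
  | succ m ih =>
      calc ldeg (A ^ (m+1)) ≤ ldeg (A ^ m) + ldeg A := by rw [pow_succ]; exact ldeg_mul_le _ _
        _ ≤ m * ldeg A + ldeg A := by omega
        _ = (m+1) * ldeg A := by ring

lemma ldeg_lam_le (p : ℕ) (hp : p ≠ 0) (Q : LaurentPolynomial k) :
    ldeg (lam p hp Q) ≤ ldeg Q / p := by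
  apply Finset.sup_le
  intro i hi
  rw [Finsupp.mem_support_iff, lam_apply] at hi
  have h1 : ((p : ℤ) * i).natAbs ≤ ldeg Q := by
    by_contra h
    exact hi (apply_eq_zero_of_ldeg_lt (not_le.mp h))
  rw [Int.natAbs_mul, Int.natAbs_natCast] at h1
  rw [Nat.le_div_iff_mul_le (Nat.pos_of_ne_zero hp), mul_comm]
  exact h1

end general

section machine
variable {k : Type*} [CommSemiring k]

/-- one digit-step of the state machine -/
noncomputable def lstep (p : ℕ) (hp : p ≠ 0) (Pt : LaurentPolynomial k) (r : ℕ)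
    (R : LaurentPolynomial k) : LaurentPolynomial k :=
  lam p hp (Pt ^ r * R)

/-- consume `n` base-`p` digits of `b` -/
noncomputable def lst (p : ℕ) (hp : p ≠ 0) (Pt : LaurentPolynomial k) :
    ℕ → ℕ → LaurentPolynomial k → LaurentPolynomial k
  | 0, _, R => R
  | (n+1), b, R => lst p hp Pt n (b / p) (lstep p hp Pt (b % p) R)

variable (p : ℕ) (hp : p ≠ 0) (Pt : LaurentPolynomial k)

lemma lst_zero_steps (b : ℕ) (R : LaurentPolynomial k) : lst p hp Pt 0 b R = R := rfl

lemma lst_succ (n b : ℕ) (R : LaurentPolynomial k) :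
    lst p hp Pt (n+1) b R = lst p hp Pt n (b / p) (lstep p hp Pt (b % p) R) := rfl

/-- basic recursion -/
lemma ct_step (hPt : Pt ^ p = substPow p Pt) (n : ℕ) (R : LaurentPolynomial k) :
    (Pt ^ n * R).coeff 0 = (Pt ^ (n / p) * lstep p hp Pt (n % p) R).coeff 0 := by
  conv_lhs => rw [show n = p * (n / p) + n % p from (Nat.div_add_mod n p).symm]
  rw [pow_add, pow_mul, hPt, ← substPow_pow, mul_assoc]
  rw [key_ct p hp]
  rfl

/-- iterated recursion -/
lemma ct_steps (hPt : Pt ^ p = substPow p Pt) (c : ℕ) :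
    ∀ b m : ℕ, ∀ R : LaurentPolynomial k,
      (Pt ^ (b + p ^ c * m) * R).coeff 0 = (Pt ^ (b / p ^ c + m) * lst p hp Pt c b R).coeff 0 := by
  induction c with
  | zero => intro b m R; simp [lst_zero_steps]
  | succ c ih =>
      intro b m R
      rw [ct_step p hp Pt hPt, lst_succ]
      have h1 : (b + p ^ (c+1) * m) % p = b % p := by
        rw [pow_succ', mul_assoc, Nat.add_mul_mod_self_left]
      have h2 : (b + p ^ (c+1) * m) / p = b / p + p ^ c * m := by
        rw [pow_succ', mul_assoc, Nat.add_mul_div_left _ _ (Nat.pos_of_ne_zero hp)]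
      rw [h1, h2, ih (b / p) m _, Nat.div_div_eq_div_mul, ← pow_succ']

/-- splitting -/
lemma lst_add (c₁ c₂ : ℕ) : ∀ b : ℕ, ∀ R : LaurentPolynomial k,
    lst p hp Pt (c₁ + c₂) b R = lst p hp Pt c₂ (b / p ^ c₁) (lst p hp Pt c₁ b R) := by
  induction c₁ with
  | zero => intro b R; simp [lst_zero_steps]
  | succ c₁ ih =>
      intro b R
      rw [show c₁ + 1 + c₂ = (c₁ + c₂) + 1 from by omega, lst_succ, ih, lst_succ,
        Nat.div_div_eq_div_mul, ← pow_succ']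

/-- only the low digits matter -/
lemma lst_mod (c : ℕ) : ∀ b : ℕ, ∀ R : LaurentPolynomial k,
    lst p hp Pt c b R = lst p hp Pt c (b % p ^ c) R := by
  induction c with
  | zero => intro b R; simp [lst_zero_steps]
  | succ c ih =>
      intro b R
      rw [lst_succ, lst_succ]
      have h1 : b % p ^ (c+1) % p = b % p :=
        Nat.mod_mod_of_dvd b (dvd_pow_self p (Nat.succ_ne_zero c))
      have h2 : b % p ^ (c+1) / p = b / p % p ^ c := by
        rw [pow_succ']
        exact Nat.mod_mul_right_div_self b p (p ^ c)
      rw [h1, h2, ← ih]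

lemma lam_smul (u : k) (Q : LaurentPolynomial k) :
    lam p hp (u • Q) = u • lam p hp Q := by
  ext i
  rw [AddMonoidAlgebra.coeff_smul_apply, lam_apply, lam_apply, AddMonoidAlgebra.coeff_smul_apply]

lemma lstep_smul (r : ℕ) (u : k) (R : LaurentPolynomial k) :
    lstep p hp Pt r (u • R) = u • lstep p hp Pt r R := by
  rw [lstep, lstep, mul_smul_comm, lam_smul]

lemma lst_smul (c : ℕ) : ∀ b : ℕ, ∀ (u : k) (R : LaurentPolynomial k),
    lst p hp Pt c b (u • R) = u • lst p hp Pt c b R := by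
  induction c with
  | zero => intro b u R; simp [lst_zero_steps]
  | succ c ih => intro b u R; rw [lst_succ, lst_succ, lstep_smul, ih]

/-- zero digits just iterate `lam` -/
lemma lst_zero_apply (c : ℕ) : ∀ (R : LaurentPolynomial k) (i : ℤ),
    (lst p hp Pt c 0 R).coeff i = R.coeff ((p : ℤ) ^ c * i) := by
  induction c with
  | zero => intro R i; simp [lst_zero_steps]
  | succ c ih =>
      intro R i
      rw [lst_succ]
      simp only [Nat.zero_div, Nat.zero_mod]
      rw [ih, lstep, pow_zero, one_mul, lam_apply]
      ring_nf

lemma lst_zero_of_big (c : ℕ) (R : LaurentPolynomial k) (h : ldeg R < p ^ c) :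
    lst p hp Pt c 0 R = AddMonoidAlgebra.single 0 (R.coeff 0) := by
  ext i
  rw [lst_zero_apply]
  rcases eq_or_ne i 0 with rfl | hi
  · simp
  · rw [AddMonoidAlgebra.coeff_single, Finsupp.single_apply, if_neg (Ne.symm hi)]
    apply apply_eq_zero_of_ldeg_lt
    rw [Int.natAbs_mul, Int.natAbs_pow, Int.natAbs_natCast]
    calc ldeg R < p ^ c := h
      _ = p ^ c * 1 := (mul_one _).symm
      _ ≤ p ^ c * i.natAbs := by
          exact Nat.mul_le_mul_left _ (Nat.one_le_iff_ne_zero.mpr (Int.natAbs_ne_zero.mpr hi))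

/-- degree invariant -/
lemma ldeg_lstep_le (E r : ℕ) (hd : ldeg Pt ≤ E) (hr : r < p) (R : LaurentPolynomial k)
    (hR : ldeg R ≤ E) : ldeg (lstep p hp Pt r R) ≤ E := by
  have h1 : ldeg (Pt ^ r * R) ≤ p * E := by
    calc ldeg (Pt ^ r * R) ≤ ldeg (Pt ^ r) + ldeg R := ldeg_mul_le _ _
      _ ≤ r * ldeg Pt + E := by have := ldeg_pow_le Pt r; omega
      _ ≤ p * E := by nlinarith
  calc ldeg (lstep p hp Pt r R) ≤ ldeg (Pt ^ r * R) / p := ldeg_lam_le p hp _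
    _ ≤ (p * E) / p := Nat.div_le_div_right h1
    _ = E := Nat.mul_div_cancel_left E (Nat.pos_of_ne_zero hp)

lemma ldeg_lst_le (E : ℕ) (hd : ldeg Pt ≤ E) (c : ℕ) : ∀ b : ℕ, ∀ R : LaurentPolynomial k,
    ldeg R ≤ E → ldeg (lst p hp Pt c b R) ≤ E := by
  induction c with
  | zero => intro b R hR; exact hR
  | succ c ih =>
      intro b R hR
      rw [lst_succ]
      exact ih _ _ (ldeg_lstep_le p hp Pt E _ hd (Nat.mod_lt _ (Nat.pos_of_ne_zero hp)) R hR)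

end machine

/-- `repN M q t` = the number whose `t` base-`M` digits all equal `q`. -/
def repN (M q : ℕ) : ℕ → ℕ
  | 0 => 0
  | (t+1) => q + M * repN M q t

lemma repN_lt (M q : ℕ) (hq : q < M) : ∀ t, repN M q t < M ^ t := by
  intro t
  induction t with
  | zero => simp [repN]
  | succ t ih =>
      have h : M * (repN M q t + 1) ≤ M * M ^ t := Nat.mul_le_mul_left M ih
      rw [Nat.mul_add, Nat.mul_one] at h
      rw [repN, pow_succ']
      omega

lemma repN_mod (M q : ℕ) (hq : q < M) (t : ℕ) : repN M q (t+1) % M = q := by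
  rw [repN, Nat.add_mul_mod_self_left, Nat.mod_eq_of_lt hq]

lemma repN_div (M q : ℕ) (hM : 0 < M) (hq : q < M) (t : ℕ) :
    repN M q (t+1) / M = repN M q t := by
  rw [repN, Nat.add_mul_div_left _ _ hM, Nat.div_eq_of_lt hq, zero_add]

section block
variable {k : Type*} [CommSemiring k]

lemma ldeg_smul_le (u : k) (F : LaurentPolynomial k) : ldeg (u • F) ≤ ldeg F :=
  Finset.sup_mono (Finsupp.support_smul)

lemma one_apply_zero : (1 : LaurentPolynomial k).coeff 0 = 1 := by
  rw [show (1 : LaurentPolynomial k) = AddMonoidAlgebra.single 0 1 from AddMonoidAlgebra.one_def]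
  exact Finsupp.single_eq_same

lemma single_zero_smul (v : k) : AddMonoidAlgebra.single (0 : ℤ) v = v • (1 : LaurentPolynomial k) := by
  rw [show (1 : LaurentPolynomial k) = AddMonoidAlgebra.single 0 1 from AddMonoidAlgebra.one_def]
  rw [AddMonoidAlgebra.smul_single', mul_one]

lemma ct_state (p : ℕ) (hp : p ≠ 0) (Pt : LaurentPolynomial k)
    (hPt : Pt ^ p = substPow p Pt) (n₀ kk : ℕ) (hk : n₀ < p ^ kk) :
    (lst p hp Pt kk n₀ 1).coeff 0 = (Pt ^ n₀).coeff 0 := by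
  have := ct_steps p hp Pt hPt kk n₀ 0 1
  rw [mul_zero, add_zero, Nat.div_eq_of_lt hk, add_zero, pow_zero, one_mul, mul_one] at this
  exact this.symm

/-- one padded block sends `R` to `(R 0 * ct(Pt^{n₀})) • 1`. -/
lemma block_step (p : ℕ) (hp : p ≠ 0) (Pt : LaurentPolynomial k)
    (hPt : Pt ^ p = substPow p Pt) (D s kk n₀ : ℕ) (hD : ldeg Pt ≤ D) (hs : D < p ^ s)
    (hk : n₀ < p ^ kk) (R : LaurentPolynomial k) (hR : ldeg R ≤ D) :
    lst p hp Pt (s + (kk + s)) (p ^ s * n₀) R = (R.coeff 0 * (Pt ^ n₀).coeff 0) • 1 := by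
  rw [lst_add, lst_mod p hp Pt s, Nat.mul_mod_right,
    lst_zero_of_big p hp Pt s R (lt_of_le_of_lt hR hs),
    Nat.mul_div_cancel_left _ (Nat.pos_of_ne_zero (pow_ne_zero s hp)),
    single_zero_smul, lst_smul]
  have hS1 : ldeg (lst p hp Pt kk n₀ 1) ≤ D :=
    ldeg_lst_le p hp Pt D hD kk n₀ 1 (by rw [ldeg_one]; omega)
  rw [lst_add, Nat.div_eq_of_lt hk,
    lst_zero_of_big p hp Pt s _ (lt_of_le_of_lt hS1 hs),
    ct_state p hp Pt hPt n₀ kk hk, single_zero_smul, smul_smul]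

lemma block_rep (p : ℕ) (hp : p ≠ 0) (Pt : LaurentPolynomial k)
    (hPt : Pt ^ p = substPow p Pt) (D s kk n₀ : ℕ) (hD : ldeg Pt ≤ D) (hs : D < p ^ s)
    (hk : n₀ < p ^ kk) (hb : p ^ s * n₀ < p ^ (s + (kk + s))) :
    ∀ (t : ℕ) (u : k),
      lst p hp Pt ((s + (kk + s)) * t) (repN (p ^ (s + (kk + s))) (p ^ s * n₀) t) (u • 1)
        = (u * ((Pt ^ n₀).coeff 0) ^ t) • 1 := by
  intro t
  induction t with
  | zero => intro u; rw [repN, Nat.mul_zero, lst_zero_steps, pow_zero, mul_one]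
  | succ t ih =>
      intro u
      have hLt : (s + (kk + s)) * (t + 1) = (s + (kk + s)) + (s + (kk + s)) * t := by ring
      rw [hLt, lst_add, lst_mod p hp Pt (s + (kk + s)),
        repN_mod _ _ hb t,
        block_step p hp Pt hPt D s kk n₀ hD hs hk (u • 1)
          (le_trans (ldeg_smul_le u 1) (by rw [ldeg_one]; omega)),
        repN_div _ _ (Nat.pos_of_ne_zero (pow_ne_zero _ hp)) hb t]
      have hu : (u • (1 : LaurentPolynomial k)).coeff 0 = u := by
        rw [AddMonoidAlgebra.coeff_smul_apply, one_apply_zero, smul_eq_mul, mul_one]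
      rw [hu, ih, mul_assoc, ← pow_succ']

lemma block_kill (p : ℕ) (hp : p ≠ 0) (Pt : LaurentPolynomial k)
    (hPt : Pt ^ p = substPow p Pt) (D s kk n₀ : ℕ) (hD : ldeg Pt ≤ D) (hs : D < p ^ s)
    (hk : n₀ < p ^ kk) (hb : p ^ s * n₀ < p ^ (s + (kk + s))) (t : ℕ)
    (hnil : ((Pt ^ n₀).coeff 0) ^ (t + 1) = 0) (R : LaurentPolynomial k) (hR : ldeg R ≤ D) :
    lst p hp Pt ((s + (kk + s)) * (t + 1)) (repN (p ^ (s + (kk + s))) (p ^ s * n₀) (t + 1)) R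
      = 0 := by
  have hLt : (s + (kk + s)) * (t + 1) = (s + (kk + s)) + (s + (kk + s)) * t := by ring
  rw [hLt, lst_add, lst_mod p hp Pt (s + (kk + s)), repN_mod _ _ hb t,
    block_step p hp Pt hPt D s kk n₀ hD hs hk R hR,
    repN_div _ _ (Nat.pos_of_ne_zero (pow_ne_zero _ hp)) hb t,
    block_rep p hp Pt hPt D s kk n₀ hD hs hk hb t, mul_assoc, ← pow_succ', hnil, mul_zero,
    zero_smul]

end block

section vanish
variable {k : Type*} [CommSemiring k]

/-- containing the aligned magic block kills the constant term -/
lemma vanish (p : ℕ) (hp : p ≠ 0) (Pt : LaurentPolynomial k)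
    (hPt : Pt ^ p = substPow p Pt) (D s kk n₀ : ℕ) (hD : ldeg Pt ≤ D) (hs : D < p ^ s)
    (hk : n₀ < p ^ kk) (hb : p ^ s * n₀ < p ^ (s + (kk + s))) (t : ℕ)
    (hnil : ((Pt ^ n₀).coeff 0) ^ (t + 1) = 0) (Q : LaurentPolynomial k) (hQ : ldeg Q ≤ D)
    (κ lo hi : ℕ) (hlo : lo < p ^ κ) :
    (Pt ^ (lo + p ^ κ * (repN (p ^ (s + (kk + s))) (p ^ s * n₀) (t + 1)
        + p ^ ((s + (kk + s)) * (t + 1)) * hi)) * Q).coeff 0 = 0 := by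
  rw [ct_steps p hp Pt hPt κ lo _ Q, Nat.div_eq_of_lt hlo, zero_add,
    ct_steps p hp Pt hPt ((s + (kk + s)) * (t + 1)) _ hi _,
    Nat.div_eq_of_lt (by
      have := repN_lt (p ^ (s + (kk + s))) (p ^ s * n₀) hb (t + 1)
      rwa [← pow_mul] at this),
    block_kill p hp Pt hPt D s kk n₀ hD hs hk hb t hnil _
      (ldeg_lst_le p hp Pt D hD κ lo Q hQ),
    mul_zero]
  rfl

end vanish

/-- counting: at most `(P-1)^N` numbers below `P^N` avoid the digit `B` in base `P`. -/
lemma count_bad (P B : ℕ) (hP : 0 < P) (hB : B < P) : ∀ N : ℕ,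
    ((Finset.range (P ^ N)).filter fun n => ∀ i, (n / P ^ i) % P ≠ B).card ≤ (P - 1) ^ N := by
  intro N
  induction N with
  | zero =>
      calc _ ≤ (Finset.range (P ^ 0)).card := Finset.card_filter_le _ _
        _ ≤ (P-1)^0 := by simp
  | succ N ih =>
      have hmaps : ∀ n ∈ (Finset.range (P ^ (N+1))).filter
          (fun n => ∀ i, (n / P ^ i) % P ≠ B),
          (n % P, n / P) ∈ ((Finset.range P).filter (· ≠ B)) ×ˢ
            ((Finset.range (P ^ N)).filter fun n => ∀ i, (n / P ^ i) % P ≠ B) := by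
        intro n hn
        rw [Finset.mem_filter, Finset.mem_range] at hn
        obtain ⟨hlt, hav⟩ := hn
        rw [Finset.mem_product, Finset.mem_filter, Finset.mem_filter, Finset.mem_range,
          Finset.mem_range]
        refine ⟨⟨Nat.mod_lt _ hP, ?_⟩, ?_, ?_⟩
        · have := hav 0
          rwa [pow_zero, Nat.div_one] at this
        · rw [Nat.div_lt_iff_lt_mul hP, ← pow_succ]
          exact hlt
        · intro i
          rw [Nat.div_div_eq_div_mul, ← pow_succ']
          exact hav (i+1)
      have hinj : Set.InjOn (fun n => (n % P, n / P)) ((Finset.range (P ^ (N+1))).filter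
          (fun n => ∀ i, (n / P ^ i) % P ≠ B)) := by
        intro x _ y _ hxy
        rw [Prod.mk.injEq] at hxy
        calc x = P * (x / P) + x % P := (Nat.div_add_mod x P).symm
          _ = P * (y / P) + y % P := by rw [hxy.1, hxy.2]
          _ = y := Nat.div_add_mod y P
      calc _ ≤ (((Finset.range P).filter (· ≠ B)) ×ˢ
            ((Finset.range (P ^ N)).filter fun n => ∀ i, (n / P ^ i) % P ≠ B)).card :=
            Finset.card_le_card_of_injOn _ hmaps hinj
        _ = ((Finset.range P).filter (· ≠ B)).card *
            ((Finset.range (P ^ N)).filter fun n => ∀ i, (n / P ^ i) % P ≠ B).card :=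
            Finset.card_product _ _
        _ ≤ (P - 1) * (P - 1) ^ N := by
            apply Nat.mul_le_mul _ ih
            rw [Finset.filter_ne', Finset.card_erase_of_mem (Finset.mem_range.mpr hB),
              Finset.card_range]
        _ = (P - 1) ^ (N + 1) := (pow_succ' _ _).symm

lemma densy (P : ℕ) (hP1 : 1 < P) (bad good : ℕ → ℕ)
    (hmono : Monotone bad) (hcard : ∀ N, N ≤ good N + bad N) (hcard2 : ∀ N, good N ≤ N)
    (hbadbound : ∀ N, bad N ≤ (P - 1) ^ (Nat.log P N + 1)) :
    Filter.Tendsto (fun N : ℕ => (good N : ℝ) / N) Filter.atTop (nhds 1) := by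
  have hP0 : 0 < P := by omega
  have hPR : (0:ℝ) < (P:ℝ) := by exact_mod_cast hP0
  have hr0 : (0:ℝ) ≤ ((P:ℝ) - 1) / P := by
    apply div_nonneg _ (le_of_lt hPR)
    have : (1:ℝ) ≤ (P:ℝ) := by exact_mod_cast le_of_lt hP1
    linarith
  have hr1 : ((P:ℝ) - 1) / P < 1 := by
    rw [div_lt_one hPR]; linarith
  have hbadlim : Filter.Tendsto (fun N : ℕ => (bad N : ℝ) / N) Filter.atTop (nhds 0) := by
    have h1 := (tendsto_pow_atTop_nhds_zero_of_lt_one hr0 hr1).const_mul ((P:ℝ) - 1)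
    rw [mul_zero] at h1
    have h2 : Filter.Tendsto (fun N : ℕ => Nat.log P N) Filter.atTop Filter.atTop :=
      Filter.tendsto_atTop_atTop_of_monotone Nat.log_monotone
        (fun b => ⟨P ^ b, le_of_eq (Nat.log_pow hP1 b).symm⟩)
    have hcomp := h1.comp h2
    apply squeeze_zero' (Filter.Eventually.of_forall fun N => by positivity) _ hcomp
    filter_upwards [Filter.eventually_ge_atTop 1] with N hN
    have hk3 : (P:ℝ) ^ Nat.log P N ≤ (N:ℝ) := by
      exact_mod_cast Nat.pow_log_le_self P (by omega)
    have hk2 : (bad N : ℝ) ≤ ((P - 1 : ℕ) : ℝ) ^ (Nat.log P N + 1) := by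
      exact_mod_cast hbadbound N
    calc (bad N : ℝ) / N ≤ ((P - 1 : ℕ) : ℝ) ^ (Nat.log P N + 1) / (P:ℝ) ^ Nat.log P N :=
          div_le_div₀ (by positivity) hk2 (by positivity) hk3
      _ = ((P:ℝ) - 1) * (((P:ℝ) - 1) / P) ^ Nat.log P N := by
          rw [Nat.cast_sub (le_of_lt hP1), Nat.cast_one, div_pow, pow_succ', ← mul_div_assoc]
  have hone : Filter.Tendsto (fun _ : ℕ => (1:ℝ)) Filter.atTop (nhds 1) := tendsto_const_nhds
  have hlow : Filter.Tendsto (fun N : ℕ => 1 - (bad N : ℝ) / N) Filter.atTop (nhds 1) := by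
    have := Filter.Tendsto.sub hone hbadlim
    simpa using this
  apply tendsto_of_tendsto_of_tendsto_of_le_of_le' hlow hone
  · filter_upwards [Filter.eventually_ge_atTop 1] with N hN
    have hN0 : (0:ℝ) < (N:ℝ) := by exact_mod_cast (by omega : 0 < N)
    have h1 : (N:ℝ) ≤ (good N : ℝ) + bad N := by exact_mod_cast hcard N
    have heq : 1 - (bad N : ℝ) / N = ((N:ℝ) - bad N) / N := by field_simp
    rw [heq, div_le_div_iff₀ hN0 hN0]
    nlinarith [h1]
  · filter_upwards [Filter.eventually_ge_atTop 1] with N hN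
    have hN0 : (0:ℝ) < (N:ℝ) := by exact_mod_cast (by omega : 0 < N)
    rw [div_le_one hN0]
    exact_mod_cast hcard2 N

/-- if `P̃` over `ℤ/p^aℤ` satisfies `P̃(x)^p = P̃(x^p)` and some
`ct(P̃^{n₀}) ≡ 0 (mod p)`, then for every `Q` the set `{n : ct(P̃^n Q) = 0}` (i.e. `≡ 0
(mod p^a)`) has natural density `1`. -/
theorem stmt18 (p : ℕ) (hp : p.Prime) (a : ℕ) (ha : 1 ≤ a)
    (Pt : LaurentPolynomial (ZMod (p ^ a))) (hPt : Pt ^ p = substPow p Pt)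
    (h0 : ∃ n₀ : ℕ,
      ZMod.castHom (dvd_pow_self p (Nat.one_le_iff_ne_zero.mp ha)) (ZMod p)
        ((Pt ^ n₀).coeff 0) = 0) :
    ∀ Q : LaurentPolynomial (ZMod (p ^ a)),
      Filter.Tendsto
        (fun N : ℕ =>
          (((Finset.range N).filter fun n => (Pt ^ n * Q).coeff 0 = 0).card : ℝ) / N)
        Filter.atTop (nhds 1) := by
  obtain ⟨t, rfl⟩ : ∃ t, a = t + 1 := ⟨a - 1, by omega⟩
  obtain ⟨n₀, hn₀⟩ := h0
  intro Q
  have hp1 : 1 < p := hp.one_lt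
  have hp0 : p ≠ 0 := hp.ne_zero
  haveI : NeZero p := ⟨hp0⟩
  haveI : NeZero (p ^ (t + 1)) := ⟨pow_ne_zero _ hp0⟩
  -- nilpotency of the constant term of `Pt ^ n₀`
  have hdvd : p ∣ ((Pt ^ n₀).coeff 0).val := by
    rw [ZMod.castHom_apply, ← ZMod.natCast_val] at hn₀
    exact (ZMod.natCast_eq_zero_iff _ _).mp hn₀
  have hnil : ((Pt ^ n₀).coeff 0) ^ (t + 1) = 0 := by
    obtain ⟨u, hu⟩ := hdvd
    have hc2 : (Pt ^ n₀).coeff 0 = ((p * u : ℕ) : ZMod (p ^ (t + 1))) := by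
      rw [← hu, ZMod.natCast_val, ZMod.cast_id]
    rw [hc2]
    push_cast
    rw [mul_pow, ← Nat.cast_pow, ZMod.natCast_self, zero_mul]
  -- parameters
  set D : ℕ := max (ldeg Pt) (ldeg Q) with hDdef
  have hD : ldeg Pt ≤ D := le_max_left _ _
  have hQD : ldeg Q ≤ D := le_max_right _ _
  set s : ℕ := D + 1 with hsdef
  have hs : D < p ^ s := by
    calc D < 2 ^ D := Nat.lt_two_pow_self
      _ ≤ 2 ^ s := Nat.pow_le_pow_right (by norm_num) (by omega)
      _ ≤ p ^ s := Nat.pow_le_pow_left hp1 s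
  set kk : ℕ := n₀ + 1 with hkkdef
  have hk : n₀ < p ^ kk := by
    calc n₀ < 2 ^ n₀ := Nat.lt_two_pow_self
      _ ≤ 2 ^ kk := Nat.pow_le_pow_right (by norm_num) (by omega)
      _ ≤ p ^ kk := Nat.pow_le_pow_left hp1 kk
  have hps : 0 < p ^ s := pow_pos (Nat.pos_of_ne_zero hp0) _
  have hbb : p ^ s * n₀ < p ^ (s + (kk + s)) := by
    calc p ^ s * n₀ < p ^ s * p ^ kk := by
          exact (mul_lt_mul_iff_right₀ hps).mpr hk
      _ = p ^ (s + kk) := (pow_add p s kk).symm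
      _ ≤ p ^ (s + (kk + s)) := Nat.pow_le_pow_right (le_of_lt hp1) (by omega)
  set P : ℕ := p ^ ((s + (kk + s)) * (t + 1)) with hPdef
  set B : ℕ := repN (p ^ (s + (kk + s))) (p ^ s * n₀) (t + 1) with hBdef
  have hB : B < P := by
    rw [hBdef, hPdef, pow_mul]
    exact repN_lt _ _ hbb (t + 1)
  have hP1 : 1 < P := by
    rw [hPdef]
    exact Nat.one_lt_pow (by positivity) hp1
  have hP0 : 0 < P := by omega
  -- block occurrence kills the constant term
  have hgood : ∀ n : ℕ, (¬ ∀ i, (n / P ^ i) % P ≠ B) → (Pt ^ n * Q).coeff 0 = 0 := by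
    intro n hnb
    push_neg at hnb
    obtain ⟨i, hi⟩ := hnb
    have hdec : n = n % P ^ i + P ^ i * (B + P * (n / P ^ i / P)) := by
      conv_lhs => rw [← Nat.mod_add_div n (P ^ i)]
      congr 1
      rw [← hi]
      rw [Nat.mod_add_div]
    rw [hdec, hPdef, hBdef, ← pow_mul]
    exact vanish p hp0 Pt hPt D s kk n₀ hD hs hk hbb t hnil Q hQD _ _ _
      (Nat.mod_lt _ (pow_pos (Nat.pos_of_ne_zero hp0) _))
  -- the bad count
  set bad : ℕ → ℕ :=
    fun N => ((Finset.range N).filter fun n => ∀ i, (n / P ^ i) % P ≠ B).card with hbaddef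
  have hmono : Monotone bad := by
    intro N M hNM
    exact Finset.card_le_card
      (Finset.filter_subset_filter _ (Finset.range_subset_range.mpr hNM))
  have hcard : ∀ N : ℕ,
      N ≤ ((Finset.range N).filter fun n => (Pt ^ n * Q).coeff 0 = 0).card + bad N := by
    intro N
    have h1 := Finset.card_filter_add_card_filter_not
      (s := Finset.range N) (p := fun n => ∀ i, (n / P ^ i) % P ≠ B)
    rw [Finset.card_range] at h1
    have h2 : ((Finset.range N).filter fun n => ¬ ∀ i, (n / P ^ i) % P ≠ B) ⊆
        (Finset.range N).filter fun n => (Pt ^ n * Q).coeff 0 = 0 :=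
      Finset.monotone_filter_right _ (fun n _ hn => hgood n hn)
    have h3 := Finset.card_le_card h2
    have h4 : ((Finset.range N).filter fun n => ∀ i, (n / P ^ i) % P ≠ B).card = bad N := rfl
    omega
  have hcard2 : ∀ N : ℕ,
      ((Finset.range N).filter fun n => (Pt ^ n * Q).coeff 0 = 0).card ≤ N := fun N =>
    le_trans (Finset.card_filter_le _ _) (le_of_eq (Finset.card_range N))
  have hbadbound : ∀ N : ℕ, bad N ≤ (P - 1) ^ (Nat.log P N + 1) := by
    intro N
    calc bad N ≤ bad (P ^ (Nat.log P N + 1)) :=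
          hmono (le_of_lt (Nat.lt_pow_succ_log_self hP1 N))
      _ ≤ (P - 1) ^ (Nat.log P N + 1) := count_bad P B hP0 hB _
  exact densy P hP1 bad
    (fun N => ((Finset.range N).filter fun n => (Pt ^ n * Q).coeff 0 = 0).card)
    hmono hcard hcard2 hbadbound
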